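/- For n ≥ 1, the set of decorated Dyck paths of size n in which the first bounce word consists entirely of zeros, with a decorated peaks and b decorated falls where the first peak is undecorated, has generating function (in q for area, t for bounce) equal to δ_{a,0} · q^{binom(n-b,2)} · C_q(n-1, b). In particular such paths exist only when a = 0, and then area-generating function over the C(n-1,b) choices of decorated falls is q^{binom(n-b,2)} C_q(n-1,b). -/

import Mathlib

open Finset
open scoped Classical

/-- The field `ℚ(q,t)` of rational functions in two variables. -/
abbrev Kqt : Type := FractionRing (MvPolynomial (Fin 2) ℚ)

/-- The variable `q`. -/
noncomputable def qv : Kqt := algebraMap (MvPolynomial (Fin 2) ℚ) Kqt (MvPolynomial.X 0)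

/-- The variable `t`. -/
noncomputable def tv : Kqt := algebraMap (MvPolynomial (Fin 2) ℚ) Kqt (MvPolynomial.X 1)

/-- The `q`-integer `[n]_q`. -/
noncomputable def qintK (n : ℕ) : Kqt := ∑ i ∈ Finset.range n, qv ^ i

/-- The `q`-factorial `[n]_q!`. -/
noncomputable def qfactK (n : ℕ) : Kqt := ∏ i ∈ Finset.range n, qintK (i + 1)

/-- The Gaussian binomial coefficient `C_q(n, k)`, zero unless `0 ≤ k ≤ n`. -/
noncomputable def qbinomK (n k : ℤ) : Kqt :=
  if 0 ≤ k ∧ k ≤ n then qfactK n.toNat / (qfactK k.toNat * qfactK (n - k).toNat) else 0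

/-- The data of a candidate decorated Dyck path of size `n` with decorated peaks and
decorated falls: a (bounded) area word, a set of decorated peaks (indexing north steps)
and a set of decorated falls (indexing east steps, the east step of column `j` being the
`j`-th one). -/
abbrev FallData (n : ℕ) : Type :=
  (Fin n → Fin (n + 1)) × Finset (Fin n) × Finset (Fin n)

namespace FallData

variable {n : ℕ}

/-- The area word, as a function to `ℕ`. -/
def w (D : FallData n) (i : Fin n) : ℕ := (D.1 i : ℕ)

/-- The north step of row `i` is a rise (followed by another north step). -/
def isRise (D : FallData n) (i : Fin n) : Prop :=
  ∃ j : Fin n, (j : ℕ) = (i : ℕ) + 1 ∧ D.w j = D.w i + 1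

/-- The north step of row `i` is a peak (followed by an east step). -/
def isPeak (D : FallData n) (i : Fin n) : Prop := ¬ D.isRise i

/-- The east step of column `j` is a fall: it is followed by another east step, i.e. it
is not the last east step and no north step lies in column `j + 1`
(the north step of row `i` lies in column `i - w i`). -/
def isFall (D : FallData n) (j : Fin n) : Prop :=
  (j : ℕ) + 1 ≠ n ∧ ∀ i : Fin n, (i : ℕ) - D.w i ≠ (j : ℕ) + 1

/-- `D` is a genuine decorated Dyck path of size `n` with `a` decorated peaks and `b`
decorated falls: the area word starts at `0` and increases by at most `1`, decorations
sit on peaks resp. falls, and have the prescribed cardinalities. -/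
def IsDecDyckF (a b : ℕ) (D : FallData n) : Prop :=
  (∀ i : Fin n, (i : ℕ) = 0 → D.w i = 0)
    ∧ (∀ i j : Fin n, (j : ℕ) = (i : ℕ) + 1 → D.w j ≤ D.w i + 1)
    ∧ (∀ i ∈ D.2.1, D.isPeak i) ∧ (∀ j ∈ D.2.2, D.isFall j)
    ∧ D.2.1.card = a ∧ D.2.2.card = b

/-- The number of north steps in columns `≤ x`. -/
noncomputable def pathHeight (D : FallData n) (x : ℕ) : ℕ :=
  (Finset.univ.filter (fun i : Fin n => (i : ℕ) - D.w i ≤ x)).card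

/-- The heights at which the first bounce path meets the main diagonal. -/
noncomputable def bpeaks (D : FallData n) : ℕ → ℕ
  | 0 => 0
  | k + 1 => D.pathHeight (D.bpeaks k)

/-- The label of row `r` in the first bounce word. -/
noncomputable def blabel (D : FallData n) (r : ℕ) : ℕ :=
  ((Finset.range (r + 1)).filter (fun k => D.bpeaks (k + 1) ≤ r)).card

/-- The first bounce statistic: the sum of the labels of the first bounce word over the
rows whose north step is not a decorated peak. -/
noncomputable def bounce (D : FallData n) : ℕ :=
  ∑ i ∈ Finset.univ.filter (fun i : Fin n => i ∉ D.2.1), D.blabel (i : ℕ)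

/-- The area: the total number of whole squares between the path and the main diagonal,
excluding the squares in the columns of the decorated falls (the east step of column `j`
lies at height `pathHeight j`, giving `pathHeight j - (j+1)` squares in that column). -/
noncomputable def area (D : FallData n) : ℕ :=
  (∑ i : Fin n, D.w i) - ∑ j ∈ D.2.2, (D.pathHeight (j : ℕ) - ((j : ℕ) + 1))

/-- The first bounce word of `D` consists entirely of zeroes. -/
noncomputable def allZeroBounceWord (D : FallData n) : Prop :=
  ∀ r : Fin n, D.blabel (r : ℕ) = 0

/-- The first peak of the path is not decorated. -/
def firstPeakUndecorated (D : FallData n) : Prop :=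
  ∀ i ∈ D.2.1, ∃ j : Fin n, j < i ∧ D.isPeak j

end FallData

/-!
An all-zero first bounce word forces the first bounce path to reach the top at once: every
north step lies in column `0`, so the path is `N^n E^n`. Its only peak is the last north step,
which is then also the first peak, so no peak may be decorated. The decorated falls form an
arbitrary `b`-subset `T` of the first `m = n - 1` columns, the bounce vanishes, and the area
counts the `m - j` cells of every column `j ∉ T`. Passing to the complement of `T`, the
resulting subset sum satisfies the `q`-Pascal recursion, which gives `q^(n-b choose 2) C_q(m, b)`.
-/

lemma Finset.sum_powersetCard_sdiff {α β : Type*} [DecidableEq α] [AddCommMonoid β]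
    {s : Finset α} {k : ℕ} (hk : k ≤ #s) (f : Finset α → β) :
    ∑ T ∈ powersetCard k s, f (s \ T) = ∑ U ∈ powersetCard (#s - k) s, f U := by
  refine sum_nbij' (s \ ·) (s \ ·) ?_ ?_ ?_ ?_ (fun _ _ => rfl) <;>
    simp only [mem_powersetCard, and_imp]
  · intro T hT hcard
    exact ⟨sdiff_subset, by rw [card_sdiff_of_subset hT, hcard]⟩
  · intro U hU hcard
    exact ⟨sdiff_subset, by rw [card_sdiff_of_subset hU, hcard]; omega⟩
  · exact fun T hT _ => sdiff_sdiff_eq_self hT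
  · exact fun U hU _ => sdiff_sdiff_eq_self hU

lemma Fin.map_valEmbedding_filter_val_mem {n : ℕ} {T : Finset ℕ} (hT : ∀ x ∈ T, x < n) :
    (univ.filter fun j : Fin n => (j : ℕ) ∈ T).map Fin.valEmbedding = T := by
  ext x
  simp only [mem_map, mem_filter, mem_univ, true_and, Fin.valEmbedding_apply]
  exact ⟨fun ⟨j, hj, hjx⟩ => hjx ▸ hj, fun hx => ⟨⟨x, hT x hx⟩, hx, rfl⟩⟩

lemma qintK_ne_zero {k : ℕ} (hk : k ≠ 0) : qintK k ≠ 0 := by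
  have hpoly : qintK k
      = algebraMap _ Kqt (∑ i ∈ range k, MvPolynomial.X (R := ℚ) (0 : Fin 2) ^ i) := by
    simp [qintK, qv]
  rw [hpoly, Ne, IsFractionRing.to_map_eq_zero_iff]
  -- the constant term of `1 + X + ⋯ + X^(k-1)` is `1`
  intro h
  have := congrArg (MvPolynomial.eval (fun _ => (0 : ℚ))) h
  simp [zero_pow_eq, sum_ite_eq'] at this
  omega

lemma qfactK_ne_zero (m : ℕ) : qfactK m ≠ 0 :=
  prod_ne_zero_iff.2 fun _ _ => qintK_ne_zero (Nat.succ_ne_zero _)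

lemma qfactK_zero : qfactK 0 = 1 := prod_range_zero _

lemma qfactK_succ (m : ℕ) : qfactK (m + 1) = qfactK m * qintK (m + 1) :=
  prod_range_succ _ m

lemma qintK_add (x y : ℕ) : qintK (x + y) = qintK x + qv ^ x * qintK y := by
  simp only [qintK, sum_range_add, mul_sum, pow_add]

noncomputable def qbinom (m k : ℕ) : Kqt :=
  if k ≤ m then qfactK m / (qfactK k * qfactK (m - k)) else 0

lemma qbinomK_natCast (m k : ℕ) : qbinomK m k = qbinom m k := by
  unfold qbinomK qbinom
  by_cases h : k ≤ m
  · rw [if_pos ⟨k.cast_nonneg, by exact_mod_cast h⟩, if_pos h, ← Nat.cast_sub h]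
    simp
  · rw [if_neg (by omega), if_neg h]

lemma qbinom_of_lt {m k : ℕ} (h : m < k) : qbinom m k = 0 := if_neg (by omega)

lemma qbinom_zero_right (m : ℕ) : qbinom m 0 = 1 := by
  rw [qbinom, if_pos m.zero_le, qfactK_zero, one_mul, Nat.sub_zero, div_self (qfactK_ne_zero m)]

lemma qbinom_self (m : ℕ) : qbinom m m = 1 := by
  rw [qbinom, if_pos le_rfl, Nat.sub_self, qfactK_zero, mul_one, div_self (qfactK_ne_zero m)]

lemma qbinom_symm {m k : ℕ} (h : k ≤ m) : qbinom m (m - k) = qbinom m k := by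
  rw [qbinom, qbinom, if_pos (Nat.sub_le m k), if_pos h, Nat.sub_sub_self h, mul_comm]

lemma qbinom_succ_succ (m k : ℕ) :
    qbinom (m + 1) (k + 1) = qv ^ (k + 1) * qbinom m (k + 1) + qbinom m k := by
  rcases lt_trichotomy k m with hlt | rfl | hgt
  · obtain ⟨d, rfl⟩ : ∃ d, m = k + 1 + d := ⟨m - (k + 1), by omega⟩
    simp only [qbinom, if_pos (by omega : k + 1 ≤ k + 1 + d + 1),
      if_pos (by omega : k + 1 ≤ k + 1 + d), if_pos (by omega : k ≤ k + 1 + d),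
      show k + 1 + d + 1 - (k + 1) = d + 1 by omega,
      show k + 1 + d - (k + 1) = d by omega, show k + 1 + d - k = d + 1 by omega]
    -- `[k+d+2] = [k+1] + q^(k+1) [d+1]` after clearing the factorials
    rw [qfactK_succ (k + 1 + d), qfactK_succ k, qfactK_succ d,
      show k + 1 + d + 1 = (k + 1) + (d + 1) by omega, qintK_add]
    have := qfactK_ne_zero (k + 1 + d)
    have := qfactK_ne_zero k
    have := qfactK_ne_zero d
    have := qintK_ne_zero (Nat.succ_ne_zero k)
    have := qintK_ne_zero (Nat.succ_ne_zero d)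
    field_simp
    ring
  · rw [qbinom_self, qbinom_self, qbinom_of_lt (Nat.lt_succ_self k), mul_zero, zero_add]
  · rw [qbinom_of_lt (by omega), qbinom_of_lt (by omega), qbinom_of_lt hgt, mul_zero, add_zero]

lemma sum_powersetCard_range_succ_qv_pow (m c : ℕ) :
    ∑ U ∈ powersetCard (c + 1) (range (m + 1)), qv ^ (∑ j ∈ U, (m + 1 - j))
      = qv ^ (c + 1) * (∑ U ∈ powersetCard (c + 1) (range m), qv ^ (∑ j ∈ U, (m - j))
        + ∑ U ∈ powersetCard c (range m), qv ^ (∑ j ∈ U, (m - j))) := by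
  have hm : m ∉ range m := notMem_range_self
  have hshift : ∀ U ⊆ range m, ∑ j ∈ U, (m + 1 - j) = ∑ j ∈ U, (m - j) + #U := by
    intro U hU
    rw [card_eq_sum_ones, ← sum_add_distrib]
    exact sum_congr rfl fun j hj => by have := mem_range.1 (hU hj); omega
  have hdisj : Disjoint (powersetCard (c + 1) (range m))
      ((powersetCard c (range m)).image (insert m)) := by
    simp only [disjoint_left, mem_powersetCard, mem_image, not_exists, not_and]
    exact fun T hT U _ hUT => hm (hT.1 (hUT ▸ mem_insert_self m U))
  have hinj : Set.InjOn (insert m) (powersetCard c (range m) : Set (Finset ℕ)) := by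
    intro U hU V hV hUV
    rw [mem_coe, mem_powersetCard] at hU hV
    rw [← erase_insert (fun h => hm (hU.1 h)), ← erase_insert (fun h => hm (hV.1 h)), hUV]
  rw [range_add_one, powersetCard_succ_insert hm, sum_union hdisj, sum_image hinj, mul_add,
    mul_sum, mul_sum]
  congr 1 <;> refine sum_congr rfl fun U hU => ?_ <;> rw [mem_powersetCard] at hU
  · rw [hshift U hU.1, hU.2, pow_add, mul_comm]
  · rw [sum_insert fun h => hm (hU.1 h), hshift U hU.1, hU.2, ← pow_add]
    congr 1
    omega

lemma sum_powersetCard_range_qv_pow (m c : ℕ) :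
    ∑ U ∈ powersetCard c (range m), qv ^ (∑ j ∈ U, (m - j))
      = qv ^ (c + 1).choose 2 * qbinom m c := by
  induction m generalizing c with
  | zero =>
    cases c with
    | zero => simp [qbinom_zero_right]
    | succ c => simp [qbinom_of_lt]
  | succ m ih =>
    cases c with
    | zero => simp [qbinom_zero_right]
    | succ c =>
      rw [sum_powersetCard_range_succ_qv_pow, ih, ih, qbinom_succ_succ,
        Nat.choose_succ_succ (c + 1), Nat.choose_one_right, pow_add]
      ring

lemma sum_powersetCard_range_qv_pow_sdiff (m b : ℕ) :
    ∑ T ∈ powersetCard b (range m), qv ^ (∑ j ∈ range m \ T, (m - j))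
      = qv ^ (m + 1 - b).choose 2 * qbinom m b := by
  by_cases hb : b ≤ m
  · rw [sum_powersetCard_sdiff (by rwa [card_range]) (fun U => qv ^ (∑ j ∈ U, (m - j))),
      card_range, sum_powersetCard_range_qv_pow, qbinom_symm hb, Nat.sub_add_comm hb]
  · rw [powersetCard_eq_empty.2 (by rw [card_range]; omega), sum_empty,
      qbinom_of_lt (by omega), mul_zero]

namespace FallData

variable {n : ℕ}

/-- The path `N^n E^n` (area word `0, 1, …, n-1`) with decorated falls `T`. -/
def diagPath (T : Finset (Fin n)) : FallData n := (Fin.castSucc, ∅, T)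

lemma w_le_self {D : FallData n} (h0 : ∀ i : Fin n, (i : ℕ) = 0 → D.w i = 0)
    (h1 : ∀ i j : Fin n, (j : ℕ) = (i : ℕ) + 1 → D.w j ≤ D.w i + 1) (i : Fin n) :
    D.w i ≤ i := by
  obtain ⟨k, hk⟩ := i
  induction k with
  | zero => exact (h0 _ rfl).le
  | succ k ih => exact (h1 ⟨k, by omega⟩ _ rfl).trans (by simpa using ih (by omega))

/-- A zero label in the last row forces the first bounce to go straight to the top. -/
lemma w_eq_of_allZeroBounceWord {D : FallData n} (h0 : ∀ i : Fin n, (i : ℕ) = 0 → D.w i = 0)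
    (h1 : ∀ i j : Fin n, (j : ℕ) = (i : ℕ) + 1 → D.w j ≤ D.w i + 1)
    (hz : D.allZeroBounceWord) (i : Fin n) : D.w i = i := by
  have hlast := hz ⟨n - 1, by have := i.2; omega⟩
  simp only [blabel, card_eq_zero, filter_eq_empty_iff, mem_range] at hlast
  have htop : n ≤ D.pathHeight 0 := by
    have := hlast (x := 0) (by omega)
    simp only [bpeaks] at this
    omega
  have hall : #(univ.filter fun j : Fin n => (j : ℕ) - D.w j ≤ 0) = #(univ : Finset (Fin n)) :=
    (card_filter_le _ _).antisymm (by rwa [card_univ, Fintype.card_fin])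
  have := card_filter_eq_iff.1 hall i (mem_univ i)
  have := w_le_self h0 h1 i
  omega

lemma pathHeight_eq_of_w_eq {D : FallData n} (hw : ∀ i : Fin n, D.w i = i) (x : ℕ) :
    D.pathHeight x = n := by
  simp [pathHeight, hw]

lemma isPeak_iff_of_w_eq {D : FallData n} (hw : ∀ i : Fin n, D.w i = i) (i : Fin n) :
    D.isPeak i ↔ (i : ℕ) + 1 = n := by
  simp only [isPeak, isRise, hw, not_exists, not_and]
  constructor
  · intro h
    by_contra hne
    exact h ⟨i + 1, by omega⟩ rfl rfl
  · intro h j hj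
    omega

lemma isFall_iff_of_w_eq {D : FallData n} (hw : ∀ i : Fin n, D.w i = i) (j : Fin n) :
    D.isFall j ↔ (j : ℕ) + 1 ≠ n := by
  simp [isFall, hw]

lemma allZeroBounceWord_of_w_eq {D : FallData n} (hw : ∀ i : Fin n, D.w i = i) :
    D.allZeroBounceWord := by
  intro r
  simp only [blabel, card_eq_zero, filter_eq_empty_iff, bpeaks, pathHeight_eq_of_w_eq hw]
  omega

lemma bounce_eq_zero_of_allZeroBounceWord {D : FallData n} (hz : D.allZeroBounceWord) :
    D.bounce = 0 :=
  sum_eq_zero fun i _ => hz i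

lemma diagPath_spec (T : Finset (Fin n)) (hT : ∀ j ∈ T, (j : ℕ) + 1 ≠ n) :
    (diagPath T).IsDecDyckF 0 #T ∧ (diagPath T).allZeroBounceWord
      ∧ (diagPath T).firstPeakUndecorated := by
  have hw : ∀ i : Fin n, (diagPath T).w i = i := fun _ => rfl
  refine ⟨⟨fun i hi => hi, fun i j hij => by simp [hw, hij], by simp [diagPath],
    fun j hj => (isFall_iff_of_w_eq hw j).2 (hT j hj), rfl, rfl⟩,
    allZeroBounceWord_of_w_eq hw, by simp [firstPeakUndecorated, diagPath]⟩

/-- Only the last row is a peak, so the first peak is the only one and cannot be decorated. -/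
lemma eq_diagPath_of_allZeroBounceWord {a b : ℕ} {D : FallData n} (hD : D.IsDecDyckF a b)
    (hz : D.allZeroBounceWord) (hfp : D.firstPeakUndecorated) :
    a = 0 ∧ D = diagPath D.2.2 ∧ ∀ j ∈ D.2.2, (j : ℕ) + 1 ≠ n := by
  obtain ⟨h0, h1, hpeak, hfall, ha, -⟩ := hD
  have hw := w_eq_of_allZeroBounceWord h0 h1 hz
  have hnopeak : D.2.1 = ∅ := by
    refine eq_empty_of_forall_notMem fun i hi => ?_
    obtain ⟨j, hji, hj⟩ := hfp i hi
    have := (isPeak_iff_of_w_eq hw i).1 (hpeak i hi)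
    have := (isPeak_iff_of_w_eq hw j).1 hj
    exact absurd hji (by omega)
  refine ⟨by rw [← ha, hnopeak, card_empty], ?_, fun j hj => (hfall j hj).1⟩
  exact Prod.ext (funext fun i => Fin.ext (hw i)) (Prod.ext hnopeak rfl)

lemma area_diagPath {m : ℕ} (T : Finset (Fin (m + 1))) (hT : ∀ j ∈ T, (j : ℕ) < m) :
    (diagPath T).area = ∑ j ∈ range m \ T.map Fin.valEmbedding, (m - j) := by
  have hsub : T.map Fin.valEmbedding ⊆ range m := by
    simpa [subset_iff] using hT
  have htotal : ∑ i : Fin (m + 1), (diagPath T).w i = ∑ j ∈ range m, (m - j) := by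
    rw [show ∑ i : Fin (m + 1), (diagPath T).w i = ∑ i ∈ range (m + 1), i from
      Fin.sum_univ_eq_sum_range id _, ← sum_range_reflect, sum_range_succ]
    simp
  have hfalls : ∑ j ∈ (diagPath T).2.2, ((diagPath T).pathHeight j - (j + 1))
      = ∑ j ∈ T.map Fin.valEmbedding, (m - j) := by
    rw [sum_map]
    exact sum_congr rfl fun j _ => by rw [pathHeight_eq_of_w_eq (fun _ => rfl)]; simp
  rw [area, htotal, hfalls, ← sum_sdiff hsub, Nat.add_sub_cancel]

end FallData

open FallData in
lemma sum_allZeroBounceWord_eq (m b : ℕ) :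
    ∑ D : {D : FallData (m + 1) //
        D.IsDecDyckF 0 b ∧ D.allZeroBounceWord ∧ D.firstPeakUndecorated},
      qv ^ D.1.area * tv ^ D.1.bounce
    = ∑ T ∈ powersetCard b (range m), qv ^ (∑ j ∈ range m \ T, (m - j)) := by
  have hpath : ∀ D ∈ univ.filter fun D : FallData (m + 1) =>
      D.IsDecDyckF 0 b ∧ D.allZeroBounceWord ∧ D.firstPeakUndecorated,
      D = diagPath D.2.2 ∧ (∀ j ∈ D.2.2, (j : ℕ) < m) ∧ D.allZeroBounceWord
        ∧ #D.2.2 = b := by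
    intro D hD
    obtain ⟨hDyck, hz, hfp⟩ := (mem_filter_univ D).1 hD
    obtain ⟨-, hdiag, hfall⟩ := eq_diagPath_of_allZeroBounceWord hDyck hz hfp
    exact ⟨hdiag, fun j hj => by have := hfall j hj; omega, hz, hDyck.2.2.2.2.2⟩
  have hfilter : ∀ T ∈ powersetCard b (range m),
      (univ.filter fun j : Fin (m + 1) => (j : ℕ) ∈ T).map Fin.valEmbedding = T := by
    intro T hT
    exact Fin.map_valEmbedding_filter_val_mem fun x hx => by
      have := mem_range.1 ((mem_powersetCard.1 hT).1 hx); omega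
  rw [← sum_subtype _ (fun D => mem_filter_univ D)
    fun D : FallData (m + 1) => qv ^ D.area * tv ^ D.bounce]
  refine sum_nbij' (fun D => D.2.2.map Fin.valEmbedding)
    (fun T => diagPath (univ.filter fun j : Fin (m + 1) => (j : ℕ) ∈ T)) ?_ ?_ ?_ hfilter ?_
  · intro D hD
    obtain ⟨-, hlt, -, hcard⟩ := hpath D hD
    rw [mem_powersetCard, card_map]
    exact ⟨by simpa [subset_iff] using hlt, hcard⟩
  · intro T hT
    have hcard : #(univ.filter fun j : Fin (m + 1) => (j : ℕ) ∈ T) = b := by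
      rw [← card_map, hfilter T hT, (mem_powersetCard.1 hT).2]
    rw [mem_filter_univ, ← hcard]
    refine diagPath_spec _ fun j hj => ?_
    have := mem_range.1 ((mem_powersetCard.1 hT).1 ((mem_filter_univ j).1 hj))
    omega
  · intro D hD
    conv_rhs => rw [(hpath D hD).1]
    congr 1
    ext j
    simp [Fin.val_inj]
  · intro D hD
    obtain ⟨hdiag, hlt, hz, -⟩ := hpath D hD
    have harea := area_diagPath D.2.2 hlt
    rw [← hdiag] at harea
    rw [harea, bounce_eq_zero_of_allZeroBounceWord hz, pow_zero, mul_one]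

/-- For `n ≥ 1`, the generating function (`q` for area, `t` for bounce) of decorated
Dyck paths of size `n` whose first bounce word consists entirely of zeroes, with `a`
decorated peaks (the first peak undecorated) and `b` decorated falls, equals
`δ_{a,0} · q^{binom(n-b,2)} · C_q(n-1, b)`. -/
theorem stmt12 (n a b : ℕ) (hn : 1 ≤ n) :
    ∑ D : {D : FallData n //
        D.IsDecDyckF a b ∧ D.allZeroBounceWord ∧ D.firstPeakUndecorated},
      qv ^ D.1.area * tv ^ D.1.bounce
    = (if a = 0 then 1 else 0) * qv ^ ((n - b) * (n - b - 1) / 2)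
        * qbinomK ((n : ℤ) - 1) (b : ℤ) := by
  obtain ⟨m, rfl⟩ : ∃ m, n = m + 1 := ⟨n - 1, by omega⟩
  rw [Nat.cast_succ, add_sub_cancel_right, qbinomK_natCast, ← Nat.choose_two_right]
  split_ifs with ha
  · subst ha
    rw [one_mul, ← sum_powersetCard_range_qv_pow_sdiff, sum_allZeroBounceWord_eq]
  · have : IsEmpty {D : FallData (m + 1) //
        D.IsDecDyckF a b ∧ D.allZeroBounceWord ∧ D.firstPeakUndecorated} :=
      ⟨fun ⟨_, hD, hz, hfp⟩ => ha (FallData.eq_diagPath_of_allZeroBounceWord hD hz hfp).1⟩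
    rw [univ_eq_empty, sum_empty, zero_mul, zero_mul]
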